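/- If every rule of a TRS R is oriented by a strongly linear interpretation A (i.e., [l]_A > [r]_A for all rules and assignments), then the derivation length of any term t with respect to →_R is at most [t]_A, which is bounded linearly in the size of t. -/

import Mathlib

inductive Term (F V : Type) : Type
  | var : V → Term F V
  | fn : F → List (Term F V) → Term F V

namespace Term
variable {F V : Type}

mutual
  def size : Term F V → ℕ
    | .var _ => 1
    | .fn _ ts => 1 + sizeList ts
  def sizeList : List (Term F V) → ℕ
    | [] => 0
    | t :: ts => size t + sizeList ts
end

mutual
  def depth : Term F V → ℕ
    | .var _ => 0
    | .fn _ ts => 1 + depthList ts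
  def depthList : List (Term F V) → ℕ
    | [] => 0
    | t :: ts => max (depth t) (depthList ts)
end

mutual
  def width : Term F V → ℕ
    | .var _ => 1
    | .fn _ [] => 1
    | .fn _ (t :: ts) => max (ts.length + 1) (max (width t) (widthList ts))
  def widthList : List (Term F V) → ℕ
    | [] => 1
    | t :: ts => max (width t) (widthList ts)
end

mutual
  def bnorm : Term F V → ℕ
    | .var _ => 1
    | .fn _ ts => 1 + max ts.length (bnormList ts)
  def bnormList : List (Term F V) → ℕ
    | [] => 0
    | t :: ts => max (bnorm t) (bnormList ts)
end

mutual
  def subst (σ : V → Term F V) : Term F V → Term F V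
    | .var x => σ x
    | .fn f ts => .fn f (substList σ ts)
  def substList (σ : V → Term F V) : List (Term F V) → List (Term F V)
    | [] => []
    | t :: ts => subst σ t :: substList σ ts
end

/-- The equivalence on terms induced by an equivalence `eqv` on function symbols:
`s ≈ t` iff `s = t`, or the roots are equivalent and the arguments are pairwise
equivalent up to a permutation. -/
inductive TermEq (eqv : F → F → Prop) : Term F V → Term F V → Prop
  | refl (t) : TermEq eqv t t
  | fn {f g : F} {ss ts : List (Term F V)} (hfg : eqv f g)
      (π : Fin ss.length → Fin ts.length) (hbij : Function.Bijective π)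
      (h : ∀ i, TermEq eqv (ss.get i) (ts.get (π i))) :
      TermEq eqv (.fn f ss) (.fn g ts)

/-- The (reflexive) subterm relation. -/
inductive Subterm : Term F V → Term F V → Prop
  | refl (t) : Subterm t t
  | arg {s t : Term F V} {f : F} {ts : List (Term F V)} :
      t ∈ ts → Subterm s t → Subterm s (.fn f ts)

end Term

namespace Term
variable {F V : Type}

mutual
  /-- The list of variables occurring in a term. -/
  def vars : Term F V → List V
    | .var x => [x]
    | .fn _ ts => varsList ts
  def varsList : List (Term F V) → List V
    | [] => []
    | t :: ts => vars t ++ varsList ts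
end

mutual
  /-- The list of function symbols occurring in a term. -/
  def funcs : Term F V → List F
    | .var _ => []
    | .fn f ts => f :: funcsList ts
  def funcsList : List (Term F V) → List F
    | [] => []
    | t :: ts => funcs t ++ funcsList ts
end

/-- A term is a value (constructor term) if it contains no defined symbol. -/
def IsValue (isDef : F → Prop) (t : Term F V) : Prop := ∀ f ∈ funcs t, ¬ isDef f

/-- The one-step rewrite relation of a set of rules `R`:
a root step under some substitution, closed under contexts. -/
inductive Rstep (R : Set (Term F V × Term F V)) : Term F V → Term F V → Prop
  | root {l r : Term F V} (σ : V → Term F V) :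
      (l, r) ∈ R → Rstep R (subst σ l) (subst σ r)
  | congr {s t : Term F V} {f : F} {ts₁ ts₂ : List (Term F V)} :
      Rstep R s t → Rstep R (.fn f (ts₁ ++ s :: ts₂)) (.fn f (ts₁ ++ t :: ts₂))

/-- `t` is a normal form of `R`. -/
def IsNF (R : Set (Term F V × Term F V)) (t : Term F V) : Prop :=
  ∀ u, ¬ Rstep R t u

end Term

namespace Term
variable {F V : Type}

mutual
  /-- Evaluation of a term under a strongly linear interpretation with
  coefficients `c` and assignment `α`: `f_A(x₁,…,xₙ) = Σ xᵢ + c f`. -/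
  def sliEval (c : F → ℕ) (α : V → ℕ) : Term F V → ℕ
    | .var x => α x
    | .fn f ts => sliEvalList c α ts + c f
  def sliEvalList (c : F → ℕ) (α : V → ℕ) : List (Term F V) → ℕ
    | [] => 0
    | t :: ts => sliEval c α t + sliEvalList c α ts
end

end Term

/-- `NSteps r n s t`: `s` rewrites to `t` in exactly `n` `r`-steps. -/
inductive NSteps {α : Type*} (r : α → α → Prop) : ℕ → α → α → Prop
  | zero (s) : NSteps r 0 s s
  | succ {n s t u} : r s t → NSteps r n t u → NSteps r (n+1) s u

open Term

/-!
Every rewrite step strictly decreases the interpretation under every assignment: at the root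
because `[lσ]_α = [l]_β` with `β x = [σ x]_α`, and below the root because `[·]` of a context is
the value of the hole plus a constant. Hence a derivation from `t` has at most `[t]_0` steps, and
`[t]_0 ≤ (max_f c f) · |t|` since each symbol contributes its constant and variables contribute `0`.
-/

theorem NSteps.le_of_decreasing {α : Type*} {r : α → α → Prop} (μ : α → ℕ)
    (hμ : ∀ s t, r s t → μ t < μ s) {n : ℕ} {s t : α} (h : NSteps r n s t) : n ≤ μ s := by
  induction h with
  | zero => exact Nat.zero_le _
  | succ hst _ ih => exact Nat.succ_le_of_lt (ih.trans_lt (hμ _ _ hst))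

namespace Term
variable {F V : Type}

mutual
theorem sliEval_subst (c : F → ℕ) (α : V → ℕ) (σ : V → Term F V) :
    ∀ t : Term F V, sliEval c α (subst σ t) = sliEval c (fun x => sliEval c α (σ x)) t
  | .var _ => rfl
  | .fn _ ts => by rw [subst, sliEval, sliEval, sliEvalList_subst c α σ ts]
theorem sliEvalList_subst (c : F → ℕ) (α : V → ℕ) (σ : V → Term F V) :
    ∀ ts : List (Term F V),
      sliEvalList c α (substList σ ts) = sliEvalList c (fun x => sliEval c α (σ x)) ts
  | [] => rfl
  | t :: ts => by
    rw [substList, sliEvalList, sliEvalList, sliEval_subst c α σ t, sliEvalList_subst c α σ ts]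
end

theorem sliEvalList_append (c : F → ℕ) (α : V → ℕ) (ts₁ ts₂ : List (Term F V)) :
    sliEvalList c α (ts₁ ++ ts₂) = sliEvalList c α ts₁ + sliEvalList c α ts₂ := by
  induction ts₁ with
  | nil => simp [sliEvalList]
  | cons t ts ih => simp only [List.cons_append, sliEvalList, ih, Nat.add_assoc]

theorem sliEval_lt_of_rstep {R : Set (Term F V × Term F V)} {c : F → ℕ}
    (hcompat : ∀ p ∈ R, ∀ α : V → ℕ, sliEval c α p.2 < sliEval c α p.1)
    {s t : Term F V} (h : Rstep R s t) (α : V → ℕ) :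
    sliEval c α t < sliEval c α s := by
  induction h with
  | root σ hmem =>
    rw [sliEval_subst, sliEval_subst]
    exact hcompat _ hmem _
  | congr _ ih =>
    simp only [sliEval, sliEvalList_append, sliEvalList]
    omega

mutual
theorem sliEval_le_mul_size {c : F → ℕ} {α : V → ℕ} {k : ℕ}
    (hc : ∀ f, c f ≤ k) (hα : ∀ x, α x ≤ k) :
    ∀ t : Term F V, sliEval c α t ≤ k * size t
  | .var x => by simpa [sliEval, size] using hα x
  | .fn f ts => by
    have hts := sliEvalList_le_mul_sizeList hc hα ts
    rw [sliEval, size, Nat.mul_add, Nat.mul_one, Nat.add_comm k]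
    exact Nat.add_le_add hts (hc f)
theorem sliEvalList_le_mul_sizeList {c : F → ℕ} {α : V → ℕ} {k : ℕ}
    (hc : ∀ f, c f ≤ k) (hα : ∀ x, α x ≤ k) :
    ∀ ts : List (Term F V), sliEvalList c α ts ≤ k * sizeList ts
  | [] => by simp [sliEvalList]
  | t :: ts => by
    rw [sliEvalList, sizeList, Nat.mul_add]
    exact Nat.add_le_add (sliEval_le_mul_size hc hα t) (sliEvalList_le_mul_sizeList hc hα ts)
end

end Term

/-- If every rule of a TRS `R` is oriented by a strongly linear interpretation
(`[l] > [r]` for all rules and assignments), then the derivation length of any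
term `t` is at most `[t]`, which in turn is bounded linearly in the size of `t`. -/
theorem sli_compatible_linear_dl {F V : Type} [Fintype F]
    (R : Set (Term F V × Term F V)) (c : F → ℕ)
    (hcompat : ∀ p ∈ R, ∀ α : V → ℕ, sliEval c α p.2 < sliEval c α p.1) :
    (∀ (t u : Term F V) (n : ℕ), NSteps (Rstep R) n t u →
      n ≤ sliEval c (fun _ => 0) t) ∧
    (∃ k : ℕ, ∀ t : Term F V, sliEval c (fun _ => 0) t ≤ k * size t) := by
  have hstep_lt : ∀ s t, Rstep R s t → sliEval c (fun _ => 0) t < sliEval c (fun _ => 0) s :=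
    fun _ _ hstep => sliEval_lt_of_rstep hcompat hstep _
  refine ⟨fun _ _ _ h => h.le_of_decreasing _ hstep_lt, Finset.univ.sup c, ?_⟩
  exact sliEval_le_mul_size (fun f => Finset.le_sup (Finset.mem_univ f)) fun _ => Nat.zero_le _
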